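/- arXiv:math/9905168 — 6 statements merged into one kernel-verified Lean document; each statement's English description precedes it below -/
import Mathlib

section
/- Let (A,R) be a triangular Hopf algebra over a field k of characteristic ≠ 2 with Drinfeld element u satisfying u² = 1 and u central and grouplike. Set R_u = (1/2)(1⊗1 + 1⊗u + u⊗1 − u⊗u). Then R·R_u is again a universal R-matrix for A making (A, R·R_u) triangular. -/
open TensorProduct

/-- A twist for a Hopf algebra `A` over `k`. -/
def IsHopfTwist (k : Type*) [Field k] (A : Type*) [Ring A] [HopfAlgebra k A]
    (J : A ⊗[k] A) : Prop :=
  IsUnit J ∧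
  (TensorProduct.map (Coalgebra.comul (R := k)) LinearMap.id J) * (J ⊗ₜ[k] (1 : A)) =
    (Algebra.TensorProduct.assoc k k k A A A).symm
      ((TensorProduct.map LinearMap.id (Coalgebra.comul (R := k)) J) * ((1 : A) ⊗ₜ[k] J)) ∧
  TensorProduct.lid k A (TensorProduct.map (Coalgebra.counit (R := k)) LinearMap.id J) = 1 ∧
  TensorProduct.rid k A (TensorProduct.map LinearMap.id (Coalgebra.counit (R := k)) J) = 1

/-- The twisted coproduct `Δ^J(a) = J⁻¹ · Δ(a) · J`, as a linear map. -/
noncomputable def twistedComul (k : Type*) [Field k] (A : Type*) [Ring A] [HopfAlgebra k A]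
    (J : A ⊗[k] A) : A →ₗ[k] A ⊗[k] A :=
  (LinearMap.mulRight k J) ∘ₗ (LinearMap.mulLeft k (Ring.inverse J)) ∘ₗ
    (Coalgebra.comul (R := k))

/-- `R₁₂ = R ⊗ 1` in `(A ⊗ A) ⊗ A`. -/
noncomputable def Rmat12 (k : Type*) [Field k] (A : Type*) [Ring A] [HopfAlgebra k A]
    (R : A ⊗[k] A) : (A ⊗[k] A) ⊗[k] A := R ⊗ₜ[k] (1 : A)

/-- `R₂₃ = 1 ⊗ R` in `(A ⊗ A) ⊗ A`. -/
noncomputable def Rmat23 (k : Type*) [Field k] (A : Type*) [Ring A] [HopfAlgebra k A]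
    (R : A ⊗[k] A) : (A ⊗[k] A) ⊗[k] A :=
  (Algebra.TensorProduct.assoc k k k A A A).symm ((1 : A) ⊗ₜ[k] R)

/-- `R₁₃` in `(A ⊗ A) ⊗ A`: `R ⊗ 1` with the second and third tensor factors swapped. -/
noncomputable def Rmat13 (k : Type*) [Field k] (A : Type*) [Ring A] [HopfAlgebra k A]
    (R : A ⊗[k] A) : (A ⊗[k] A) ⊗[k] A :=
  (Algebra.TensorProduct.assoc k k k A A A).symm
    (TensorProduct.map LinearMap.id (TensorProduct.comm k A A).toLinearMap
      ((Algebra.TensorProduct.assoc k k k A A A) (R ⊗ₜ[k] (1 : A))))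

/-- A universal R-matrix for a Hopf algebra `A`: an invertible element of `A ⊗ A`
intertwining the coproduct and the opposite coproduct, and satisfying the hexagon
identities. -/
def IsUniversalRMatrix (k : Type*) [Field k] (A : Type*) [Ring A] [HopfAlgebra k A]
    (R : A ⊗[k] A) : Prop :=
  IsUnit R ∧
  (∀ a : A, R * Coalgebra.comul (R := k) a =
    (Algebra.TensorProduct.comm k A A) (Coalgebra.comul (R := k) a) * R) ∧
  TensorProduct.map (Coalgebra.comul (R := k)) LinearMap.id R =
    Rmat13 k A R * Rmat23 k A R ∧
  (Algebra.TensorProduct.assoc k k k A A A).symm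
      (TensorProduct.map LinearMap.id (Coalgebra.comul (R := k)) R) =
    Rmat13 k A R * Rmat12 k A R

/-!
Writing `e = (1 + u)/2`, the element `R_u = e ⊗ 1 + (1 - e) ⊗ u` is the R-matrix of the
group algebra of `{1, u} ≅ ℤ/2` for the bicharacter with `⟨u, u⟩ = -1`. Since `u` is central and
grouplike with `u² = 1`, `R_u` is a central, symmetric involution of `A ⊗ A` satisfying both
hexagon identities. Multiplying an R-matrix by such an element keeps the intertwining property
(by centrality), the hexagon identities (the legs of `R_u` commute with those of `R`) and
triangularity (`(R R_u)₂₁ R R_u = R₂₁ R · R_u²`).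
-/

section Legs

variable {k : Type*} [Field k] {A : Type*} [Ring A] [HopfAlgebra k A]

variable (k A) in
noncomputable def leg13 : A ⊗[k] A →ₐ[k] (A ⊗[k] A) ⊗[k] A :=
  (Algebra.TensorProduct.assoc k k k A A A).symm.toAlgHom.comp <|
    (Algebra.TensorProduct.map (AlgHom.id k A) (Algebra.TensorProduct.comm k A A).toAlgHom).comp <|
      (Algebra.TensorProduct.assoc k k k A A A).toAlgHom.comp Algebra.TensorProduct.includeLeft

variable (k A) in
noncomputable def leg23 : A ⊗[k] A →ₐ[k] (A ⊗[k] A) ⊗[k] A :=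
  (Algebra.TensorProduct.assoc k k k A A A).symm.toAlgHom.comp Algebra.TensorProduct.includeRight

theorem Rmat13_eq_leg13 (x : A ⊗[k] A) : Rmat13 k A x = leg13 k A x := by
  have : TensorProduct.map LinearMap.id (TensorProduct.comm k A A).toLinearMap =
      (Algebra.TensorProduct.map (AlgHom.id k A)
        (Algebra.TensorProduct.comm k A A).toAlgHom).toLinearMap := by
    ext; simp
  rw [Rmat13, this]
  rfl

theorem Rmat23_eq_leg23 (x : A ⊗[k] A) : Rmat23 k A x = leg23 k A x := rfl

@[simp]
theorem leg13_tmul (a b : A) : leg13 k A (a ⊗ₜ b) = (a ⊗ₜ 1) ⊗ₜ b := by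
  simp [leg13]

@[simp]
theorem leg23_tmul (a b : A) : leg23 k A (a ⊗ₜ b) = (1 ⊗ₜ a) ⊗ₜ b := by
  simp [leg23]

theorem Rmat12_mul (x y : A ⊗[k] A) : Rmat12 k A (x * y) = Rmat12 k A x * Rmat12 k A y := by
  simp [Rmat12, Algebra.TensorProduct.tmul_mul_tmul]

theorem Rmat13_mul (x y : A ⊗[k] A) : Rmat13 k A (x * y) = Rmat13 k A x * Rmat13 k A y := by
  simp [Rmat13_eq_leg13]

theorem Rmat23_mul (x y : A ⊗[k] A) : Rmat23 k A (x * y) = Rmat23 k A x * Rmat23 k A y := by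
  simp [Rmat23_eq_leg23]

theorem map_comul_id_eq (x : A ⊗[k] A) :
    TensorProduct.map (Coalgebra.comul (R := k)) LinearMap.id x =
      Algebra.TensorProduct.map (Bialgebra.comulAlgHom k A) (AlgHom.id k A) x := by
  induction x using TensorProduct.induction_on <;> simp_all

theorem map_id_comul_eq (x : A ⊗[k] A) :
    TensorProduct.map LinearMap.id (Coalgebra.comul (R := k)) x =
      Algebra.TensorProduct.map (AlgHom.id k A) (Bialgebra.comulAlgHom k A) x := by
  induction x using TensorProduct.induction_on <;> simp_all

end Legs

theorem Commute.tmul_of_forall {R A B : Type*} [CommRing R] [Ring A] [Ring B] [Algebra R A]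
    [Algebra R B] {a : A} {b : B} (ha : ∀ x, Commute a x) (hb : ∀ y, Commute b y)
    (z : A ⊗[R] B) : Commute (a ⊗ₜ b) z := by
  induction z using TensorProduct.induction_on with
  | zero => exact Commute.zero_right _
  | add x y hx hy => exact hx.add_right hy
  | tmul x y => exact (ha x).tmul (hb y)

section Twist

variable {k : Type*} [Field k] {A : Type*} [Ring A] [HopfAlgebra k A]

theorem IsUniversalRMatrix.mul_of_forall_commute {R F : A ⊗[k] A}
    (hR : IsUniversalRMatrix k A R) (hF : IsUnit F) (hF_comm : ∀ z, Commute F z)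
    (hF13_comm : ∀ z, Commute (Rmat13 k A F) z)
    (hF_hex₁ : TensorProduct.map (Coalgebra.comul (R := k)) LinearMap.id F =
      Rmat13 k A F * Rmat23 k A F)
    (hF_hex₂ : (Algebra.TensorProduct.assoc k k k A A A).symm
      (TensorProduct.map LinearMap.id (Coalgebra.comul (R := k)) F) =
      Rmat13 k A F * Rmat12 k A F) :
    IsUniversalRMatrix k A (R * F) := by
  obtain ⟨hR_unit, hR_comul, hR_hex₁, hR_hex₂⟩ := hR
  refine ⟨hR_unit.mul hF, fun a => ?_, ?_, ?_⟩
  · rw [mul_assoc, (hF_comm _).eq, ← mul_assoc, hR_comul a, mul_assoc]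
  · rw [map_comul_id_eq, map_mul, ← map_comul_id_eq, ← map_comul_id_eq, hR_hex₁, hF_hex₁,
      Rmat13_mul, Rmat23_mul]
    exact (hF13_comm _).symm.mul_mul_mul_comm _ _
  · rw [map_id_comul_eq, map_mul, ← map_id_comul_eq, ← map_id_comul_eq, map_mul, hR_hex₂,
      hF_hex₂, Rmat13_mul, Rmat12_mul]
    exact (hF13_comm _).symm.mul_mul_mul_comm _ _

theorem comm_mul_mul_eq_one {R F : A ⊗[k] A}
    (hR : Algebra.TensorProduct.comm k A A R * R = 1) (hF_comm : ∀ z, Commute F z)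
    (hF : Algebra.TensorProduct.comm k A A F * F = 1) :
    Algebra.TensorProduct.comm k A A (R * F) * (R * F) = 1 := by
  have hcommF : Commute (Algebra.TensorProduct.comm k A A F) R := by
    simpa using (hF_comm ((Algebra.TensorProduct.comm k A A).symm R)).map
      (Algebra.TensorProduct.comm k A A)
  rw [map_mul, hcommF.mul_mul_mul_comm, hR, hF, one_mul]

end Twist

section Ru

variable {k : Type*} [Field k] {A : Type*} [Ring A] [HopfAlgebra k A] {u : A}

variable (k) in
noncomputable def Ru (u : A) : A ⊗[k] A :=
  (2 : k)⁻¹ • ((1 : A ⊗[k] A) + (1 : A) ⊗ₜ[k] u + u ⊗ₜ[k] (1 : A) - u ⊗ₜ[k] u)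

theorem Ru_mul_self (h2 : (2 : k) ≠ 0) (hu2 : u * u = 1) : Ru k u * Ru k u = 1 := by
  rw [Ru, smul_mul_smul_comm]
  simp only [mul_add, add_mul, mul_sub, sub_mul, mul_one, one_mul,
    Algebra.TensorProduct.tmul_mul_tmul, hu2, Algebra.TensorProduct.one_def]
  match_scalars <;> field_simp <;> ring

theorem Ru_commute (hu : ∀ a, Commute u a) (z : A ⊗[k] A) : Commute (Ru k u) z :=
  ((((Commute.one_left z).add_left (Commute.tmul_of_forall Commute.one_left hu z)).add_left
      (Commute.tmul_of_forall hu Commute.one_left z)).sub_left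
    (Commute.tmul_of_forall hu hu z)).smul_left _

theorem comm_Ru : Algebra.TensorProduct.comm k A A (Ru k u) = Ru k u := by
  simp only [Ru, map_smul, map_add, map_sub, map_one, Algebra.TensorProduct.comm_tmul]
  module

theorem Rmat13_Ru_commute (hu : ∀ a, Commute u a) (z : (A ⊗[k] A) ⊗[k] A) :
    Commute (Rmat13 k A (Ru k u)) z := by
  have h11 : ∀ x : A ⊗[k] A, Commute ((1 : A) ⊗ₜ[k] (1 : A)) x :=
    Commute.tmul_of_forall Commute.one_left Commute.one_left
  have hu1 : ∀ x : A ⊗[k] A, Commute (u ⊗ₜ[k] (1 : A)) x :=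
    Commute.tmul_of_forall hu Commute.one_left
  simp only [Rmat13_eq_leg13, Ru, map_smul, map_add, map_sub, map_one, leg13_tmul]
  exact ((((Commute.one_left z).add_left (Commute.tmul_of_forall h11 hu z)).add_left
      (Commute.tmul_of_forall hu1 Commute.one_left z)).sub_left
    (Commute.tmul_of_forall hu1 hu z)).smul_left _

theorem map_comul_id_Ru (h2 : (2 : k) ≠ 0) (hgrp : Coalgebra.comul (R := k) u = u ⊗ₜ[k] u)
    (hu2 : u * u = 1) :
    TensorProduct.map (Coalgebra.comul (R := k)) LinearMap.id (Ru k u) =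
      Rmat13 k A (Ru k u) * Rmat23 k A (Ru k u) := by
  simp only [Rmat13_eq_leg13, Rmat23_eq_leg23, Ru, map_smul, map_add, map_sub, leg13_tmul,
    leg23_tmul, Algebra.TensorProduct.one_def, TensorProduct.map_tmul, Bialgebra.comul_one, hgrp,
    LinearMap.id_coe, id_eq, smul_mul_smul_comm, mul_add, add_mul, mul_sub, sub_mul, mul_one,
    one_mul, Algebra.TensorProduct.tmul_mul_tmul, hu2]
  match_scalars <;> field_simp <;> ring

theorem map_id_comul_Ru (h2 : (2 : k) ≠ 0) (hgrp : Coalgebra.comul (R := k) u = u ⊗ₜ[k] u)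
    (hu2 : u * u = 1) :
    (Algebra.TensorProduct.assoc k k k A A A).symm
      (TensorProduct.map LinearMap.id (Coalgebra.comul (R := k)) (Ru k u)) =
      Rmat13 k A (Ru k u) * Rmat12 k A (Ru k u) := by
  simp only [Rmat13_eq_leg13, Rmat12, Ru, map_smul, map_add, map_sub, leg13_tmul,
    ← smul_tmul', add_tmul, sub_tmul, Algebra.TensorProduct.one_def, TensorProduct.map_tmul,
    Bialgebra.comul_one, hgrp, LinearMap.id_coe, id_eq, Algebra.TensorProduct.assoc_symm_tmul,
    smul_mul_smul_comm, mul_add, add_mul, mul_sub, sub_mul, mul_one, one_mul,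
    Algebra.TensorProduct.tmul_mul_tmul, hu2]
  match_scalars <;> field_simp <;> ring

end Ru

theorem mul_Ru_triangular_general (k : Type*) [Field k] (A : Type*) [Ring A] [HopfAlgebra k A]
    (hchar : (2 : k) ≠ 0)
    (R : A ⊗[k] A) (hR : IsUniversalRMatrix k A R)
    (htri : (Algebra.TensorProduct.comm k A A) R * R = 1)
    (u : A) (hgrp : Coalgebra.comul (R := k) u = u ⊗ₜ[k] u)
    (hcentral : ∀ a : A, u * a = a * u) (hu2 : u * u = 1) :
    IsUniversalRMatrix k A
        (R * ((2 : k)⁻¹ • ((1 : A ⊗[k] A) + (1 : A) ⊗ₜ[k] u + u ⊗ₜ[k] (1 : A) - u ⊗ₜ[k] u))) ∧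
      (Algebra.TensorProduct.comm k A A)
          (R * ((2 : k)⁻¹ • ((1 : A ⊗[k] A) + (1 : A) ⊗ₜ[k] u + u ⊗ₜ[k] (1 : A) - u ⊗ₜ[k] u))) *
        (R * ((2 : k)⁻¹ • ((1 : A ⊗[k] A) + (1 : A) ⊗ₜ[k] u + u ⊗ₜ[k] (1 : A) - u ⊗ₜ[k] u))) =
      1 := by
  have hRu : Ru k u * Ru k u = 1 := Ru_mul_self hchar hu2
  refine ⟨hR.mul_of_forall_commute ⟨⟨Ru k u, Ru k u, hRu, hRu⟩, rfl⟩ (Ru_commute hcentral)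
      (Rmat13_Ru_commute hcentral) (map_comul_id_Ru hchar hgrp hu2)
      (map_id_comul_Ru hchar hgrp hu2), ?_⟩
  exact comm_mul_mul_eq_one (F := Ru k u) htri (Ru_commute hcentral) (by rw [comm_Ru, hRu])

/-- If `(A,R)` is triangular over `k` (char ≠ 2) with Drinfeld element `u` central, grouplike
and satisfying `u² = 1`, and `R_u = ½(1⊗1 + 1⊗u + u⊗1 − u⊗u)`, then `R·R_u` is again a
universal R-matrix for `A` making `(A, R·R_u)` triangular. -/
theorem mul_Ru_triangular (k : Type*) [Field k] (A : Type*) [Ring A] [HopfAlgebra k A]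
    (hchar : (2 : k) ≠ 0)
    (R : A ⊗[k] A) (hR : IsUniversalRMatrix k A R)
    (htri : (Algebra.TensorProduct.comm k A A) R * R = 1)
    (u : A) (hgrp : Coalgebra.comul (R := k) u = u ⊗ₜ[k] u)
    (hcounit : Coalgebra.counit (R := k) u = (1 : k))
    (hcentral : ∀ a : A, u * a = a * u) (hu2 : u * u = 1) :
    IsUniversalRMatrix k A
        (R * ((2 : k)⁻¹ • ((1 : A ⊗[k] A) + (1 : A) ⊗ₜ[k] u + u ⊗ₜ[k] (1 : A) - u ⊗ₜ[k] u))) ∧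
      (Algebra.TensorProduct.comm k A A)
          (R * ((2 : k)⁻¹ • ((1 : A ⊗[k] A) + (1 : A) ⊗ₜ[k] u + u ⊗ₜ[k] (1 : A) - u ⊗ₜ[k] u))) *
        (R * ((2 : k)⁻¹ • ((1 : A ⊗[k] A) + (1 : A) ⊗ₜ[k] u + u ⊗ₜ[k] (1 : A) - u ⊗ₜ[k] u))) =
      1 :=
  mul_Ru_triangular_general k A hchar R hR htri u hgrp hcentral hu2
end

section
/- Let K be a finite group with an irreducible complex representation V such that (dim V)² = [K : Z], where Z is a central subgroup of K contained in the kernel of the induced projective representation (i.e. V restricted to Z acts by scalars). Then Z equals the full center Z(K). -/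
/-!
By Burnside's theorem the operators `ρ g` span `End V`, a space of dimension `d²`. By Schur's
lemma the center acts by scalars, so `ρ g` is a multiple of `ρ` of a fixed representative of the
coset `g Z(K)`; hence `d² ≤ [K : Z(K)] ≤ [K : Z] = d²`, which forces `Z = Z(K)`.
-/

open Module

/-- Burnside's theorem, from the Jacobson density theorem and Schur's lemma. -/
theorem IsSimpleModule.lsmul_surjective_of_isAlgClosed (k : Type*) {A M : Type*} [Field k]
    [IsAlgClosed k] [Ring A] [Algebra k A] [AddCommGroup M] [Module k M] [Module A M]
    [IsScalarTower k A M] [IsSimpleModule A M] [FiniteDimensional k M] :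
    Function.Surjective (Algebra.lsmul k k M : A →ₐ[k] End k M) := by
  have hschur := IsSimpleModule.algebraMap_end_bijective_of_isAlgClosed (A := A) (V := M) k
  have : Module.Finite (End A M) M := Module.Finite.of_restrictScalars_finite k (End A M) M
  intro f
  let F : End (End A M) M :=
    { toFun := f
      map_add' := f.map_add
      map_smul' := fun φ m => by
        obtain ⟨c, rfl⟩ := hschur.2 φ
        simp }
  obtain ⟨a, ha⟩ := Module.Finite.toModuleEnd_moduleEnd_surjective (R := A) (M := M) F
  exact ⟨a, LinearMap.ext fun m => congr($ha m)⟩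

namespace Representation

open scoped MonoidAlgebra

variable {k G V : Type*} [Field k] [AddCommGroup V] [Module k V]

section Monoid

variable [Monoid G] (ρ : Representation k G V)

theorem isIrreducible_of_forall_invariant_eq_bot_or_eq_top [Nontrivial V]
    (h : ∀ W : Submodule k V, (∀ g : G, ∀ v ∈ W, ρ g v ∈ W) → W = ⊥ ∨ W = ⊤) :
    ρ.IsIrreducible where
  exists_pair_ne := ⟨⊥, ⊤, fun hbot => bot_ne_top congr(Subrepresentation.toSubmodule $hbot)⟩
  eq_bot_or_eq_top W := (h W.toSubmodule fun g _ hv => W.apply_mem_toSubmodule g hv).imp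
    (fun hW => Subrepresentation.toSubmodule_injective hW)
    (fun hW => Subrepresentation.toSubmodule_injective hW)

variable [IsAlgClosed k] [FiniteDimensional k V] [ρ.IsIrreducible]

theorem asAlgebraHom_surjective_of_isIrreducible : Function.Surjective ρ.asAlgebraHom := by
  intro f
  have hsurj := IsSimpleModule.lsmul_surjective_of_isAlgClosed k (A := k[G]) (M := ρ.asModule)
  obtain ⟨a, ha⟩ := hsurj f
  exact ⟨a, LinearMap.ext fun v => congr($ha v)⟩

theorem span_range_eq_top_of_isIrreducible : Submodule.span k (Set.range ρ) = ⊤ := by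
  rw [eq_top_iff]
  rintro f -
  obtain ⟨a, rfl⟩ := ρ.asAlgebraHom_surjective_of_isIrreducible f
  induction a using MonoidAlgebra.induction_on with
  | of g => exact Submodule.subset_span ⟨g, (ρ.asAlgebraHom_of g).symm⟩
  | add a b ha hb => simpa only [map_add] using add_mem ha hb
  | smul c a ha => simpa only [map_smul] using Submodule.smul_mem _ c ha

theorem exists_eq_smul_one_of_mem_center {z : G} (hz : z ∈ Submonoid.center G) :
    ∃ c : k, ρ z = c • 1 := by
  obtain ⟨c, hc⟩ := IsIrreducible.algebraMap_intertwiningMap_bijective_of_isAlgClosed.2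
    (IntertwiningMap.centralMul ρ z hz)
  exact ⟨c, LinearMap.ext fun v => congr($hc.symm v)⟩

end Monoid

section Group

variable [Group G] [IsAlgClosed k] [FiniteDimensional k V]

theorem finrank_sq_le_index_of_forall_mem_eq_smul_one (ρ : Representation k G V)
    [ρ.IsIrreducible] (C : Subgroup G) [C.FiniteIndex]
    (hC : ∀ z ∈ C, ∃ c : k, ρ z = c • 1) : finrank k V ^ 2 ≤ C.index := by
  have := C.fintypeQuotientOfFiniteIndex
  have hspan : Submodule.span k (Set.range ρ) ≤
      Submodule.span k (Set.range fun q : G ⧸ C => ρ q.out) := by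
    refine Submodule.span_le.2 ?_
    rintro _ ⟨g, rfl⟩
    obtain ⟨⟨z, hz⟩, hout⟩ := QuotientGroup.mk_out_eq_mul C g
    obtain ⟨c, hc⟩ := hC z⁻¹ (inv_mem hz)
    have hg : ρ g = c • ρ (g : G ⧸ C).out := by
      rw [← mul_one (ρ (g : G ⧸ C).out), ← mul_smul_comm, ← hc, ← map_mul, hout,
        mul_inv_cancel_right]
    rw [hg]
    exact Submodule.smul_mem _ c (Submodule.subset_span ⟨_, rfl⟩)
  calc finrank k V ^ 2 = finrank k (Submodule.span k (Set.range ρ)) := by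
        rw [span_range_eq_top_of_isIrreducible, finrank_top, Module.finrank_linearMap, sq]
    _ ≤ finrank k (Submodule.span k (Set.range fun q : G ⧸ C => ρ q.out)) :=
        Submodule.finrank_mono hspan
    _ ≤ Fintype.card (G ⧸ C) := finrank_range_le_card _
    _ = C.index := by rw [Subgroup.index_eq_card, Nat.card_eq_fintype_card]

theorem finrank_sq_le_index_center (ρ : Representation k G V) [ρ.IsIrreducible]
    [(Subgroup.center G).FiniteIndex] :
    finrank k V ^ 2 ≤ (Subgroup.center G).index :=
  ρ.finrank_sq_le_index_of_forall_mem_eq_smul_one _ fun _ hz =>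
    ρ.exists_eq_smul_one_of_mem_center (Subgroup.center_toSubmonoid G ▸ hz)

end Group

end Representation

theorem central_subgroup_eq_center_of_sq_dim_eq_index_general (K : Type*) [Group K]
    (Z : Subgroup K) (hZ : Z ≤ Subgroup.center K)
    (V : Type*) [AddCommGroup V] [Module ℂ V] [FiniteDimensional ℂ V]
    (ρ : Representation ℂ K V) (hV : Nontrivial V)
    (hirr : ∀ W : Submodule ℂ V, (∀ g : K, ∀ v ∈ W, ρ g v ∈ W) → W = ⊥ ∨ W = ⊤)
    (hdim : (Module.finrank ℂ V) ^ 2 = Z.index) :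
    Z = Subgroup.center K := by
  have := ρ.isIrreducible_of_forall_invariant_eq_bot_or_eq_top hirr
  have : Z.FiniteIndex := ⟨by rw [← hdim]; exact pow_ne_zero 2 Module.finrank_pos.ne'⟩
  have := Subgroup.finiteIndex_of_le hZ
  have hindex : Z.index ≤ (Subgroup.center K).index := hdim ▸ ρ.finrank_sq_le_index_center
  exact hZ.eq_of_not_lt fun hlt => (Subgroup.index_strictAnti hlt).not_ge hindex

/-- Let `K` be a finite group, `Z` a central subgroup, and `V` an irreducible complex
representation of `K` on which `Z` acts by scalars and with `(dim V)² = [K : Z]`. Then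
`Z` equals the full center `Z(K)`. -/
theorem central_subgroup_eq_center_of_sq_dim_eq_index (K : Type*) [Group K] [Fintype K]
    (Z : Subgroup K) (hZ : Z ≤ Subgroup.center K)
    (V : Type*) [AddCommGroup V] [Module ℂ V] [FiniteDimensional ℂ V]
    (ρ : Representation ℂ K V) (hV : Nontrivial V)
    (hirr : ∀ W : Submodule ℂ V, (∀ g : K, ∀ v ∈ W, ρ g v ∈ W) → W = ⊥ ∨ W = ⊤)
    (hscalar : ∀ z ∈ Z, ∃ c : ℂ, ρ z = c • (LinearMap.id : V →ₗ[ℂ] V))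
    (hdim : (Module.finrank ℂ V) ^ 2 = Z.index) :
    Z = Subgroup.center K :=
  central_subgroup_eq_center_of_sq_dim_eq_index_general K Z hZ V ρ hV hirr hdim
end

section
/- With notation as above, the algebra with basis {Z_{bg}} and product Z_{b₂g₂} * Z_{b₁g₁} = e^{(π(g₁),b₂)} Z_{b₁g₂} acts on V = Fun(A, ℂ) by Z_{bg}·δ_a = e^{(a,b)} δ_{π(g)}, and this action is a well-defined (associative, unital) module structure. -/
/-!
Writing `v̂(b) = ∑ₐ v(a) e^{(a,b)}`, the action is `Z_{b,g} · v = v̂(b) δ_{π(g)}`, which is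
bilinear in `Z` and `v`. Associativity comes down to `(Z_{b₁,g₁} · v)^(b₂) = v̂(b₁) e^{(π(g₁),b₂)}`.
Unitality is Fourier inversion `∑_b e^{(a',b)}⁻¹ v̂(b) = |A*| v(a')`, a consequence of the
orthogonality of the characters `e^{(a,·)}`; bijectivity of `π` collapses the sum over `g`,
and `|A*| = |A|` matches the normalisation of the unit.
-/

/-- The product `Z_{b₂,g₂} * Z_{b₁,g₁} = e^{(π(g₁),b₂)} Z_{b₁,g₂}`. -/
noncomputable def Zmul {A Adual G : Type*} (ee : A → Adual → ℂˣ) (π : G → A)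
    (x y : (Adual × G) →₀ ℂ) : (Adual × G) →₀ ℂ :=
  x.sum fun p₂ c₂ => y.sum fun p₁ c₁ =>
    Finsupp.single (p₁.1, p₂.2) (c₂ * c₁ * ((ee (π p₁.2) p₂.1 : ℂˣ) : ℂ))

/-- The action of the algebra with basis `{Z_{b,g}}` on `V = Fun(A,ℂ)` determined by
`Z_{b,g} · δ_a = e^{(a,b)} δ_{π(g)}`, extended bilinearly. -/
noncomputable def Zact {A Adual G : Type*} [Fintype A] [DecidableEq A]
    (ee : A → Adual → ℂˣ) (π : G → A) (x : (Adual × G) →₀ ℂ) (v : A → ℂ) : A → ℂ :=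
  x.sum fun p c => fun a' : A =>
    (c * ∑ a : A, v a * ((ee a p.1 : ℂˣ) : ℂ)) * (if a' = π p.2 then 1 else 0)

/-- The unit element `|A|⁻¹ ∑_{b,g} e^{(π(g),b)}⁻¹ Z_{b,g}` of the algebra. -/
noncomputable def ZunitElem {A Adual G : Type*} [Fintype A] [Fintype Adual] [Fintype G]
    (ee : A → Adual → ℂˣ) (π : G → A) : (Adual × G) →₀ ℂ :=
  (Fintype.card A : ℂ)⁻¹ •
    ∑ b : Adual, ∑ g : G, Finsupp.single (b, g) ((((ee (π g) b)⁻¹ : ℂˣ)) : ℂ)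

section Pairing

variable {A Adual : Type*} [AddCommGroup Adual] [Fintype Adual] {ee : A → Adual → ℂˣ}

theorem sum_pairing_eq_zero {a : A} (hadd : ∀ b b', ee a (b + b') = ee a b * ee a b')
    {b₀ : Adual} (hb₀ : ee a b₀ ≠ 1) : ∑ b, (ee a b : ℂ) = 0 := by
  let ψ : AddChar Adual ℂ :=
    { toFun b := ee a b
      map_zero_eq_one' := by
        have h := hadd 0 0
        rw [add_zero, left_eq_mul] at h
        simp [h]
      map_add_eq_mul' b b' := by simp [hadd] }
  refine AddChar.sum_eq_zero_of_ne_one (ψ := ψ) (AddChar.ne_one_iff.2 ⟨b₀, ?_⟩)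
  simpa [ψ, Units.val_eq_one] using hb₀

theorem sum_pairing_sub_eq_ite [AddCommGroup A] [DecidableEq A]
    (hadd_left : ∀ a a' b, ee (a + a') b = ee a b * ee a' b)
    (hadd_right : ∀ a b b', ee a (b + b') = ee a b * ee a b')
    (hnd_left : ∀ a : A, a ≠ 0 → ∃ b, ee a b ≠ 1) (a a' : A) :
    ∑ b, (ee (a - a') b : ℂ) = if a = a' then (Fintype.card Adual : ℂ) else 0 := by
  split_ifs with h
  · have hzero : ∀ b, ee 0 b = 1 := fun b => by
      have h := hadd_left 0 0 b
      rwa [add_zero, left_eq_mul] at h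
    simp [h, hzero]
  · obtain ⟨b₀, hb₀⟩ := hnd_left (a - a') (sub_ne_zero.2 h)
    exact sum_pairing_eq_zero (hadd_right _) hb₀

end Pairing

section Transform

variable {A Adual : Type*} [Fintype A] (ee : A → Adual → ℂˣ)

noncomputable def pairingTransform (b : Adual) : (A → ℂ) →ₗ[ℂ] ℂ :=
  Fintype.linearCombination ℂ fun a => (ee a b : ℂ)

theorem pairingTransform_apply (b : Adual) (v : A → ℂ) :
    pairingTransform ee b v = ∑ a, v a * ee a b :=
  rfl

theorem pairingTransform_single [DecidableEq A] (b : Adual) (a : A) (c : ℂ) :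
    pairingTransform ee b (Pi.single a c) = c * ee a b :=
  Fintype.linearCombination_apply_single ℂ _ a c

theorem sum_inv_pairing_mul_pairingTransform [AddCommGroup A] [AddCommGroup Adual]
    [Fintype Adual] [DecidableEq A] (hadd_left : ∀ a a' b, ee (a + a') b = ee a b * ee a' b)
    (hadd_right : ∀ a b b', ee a (b + b') = ee a b * ee a b')
    (hnd_left : ∀ a : A, a ≠ 0 → ∃ b, ee a b ≠ 1) (v : A → ℂ) (a' : A) :
    ∑ b, ((ee a' b)⁻¹ : ℂˣ) * pairingTransform ee b v = Fintype.card Adual * v a' := by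
  have hsub : ∀ a b, (((ee a' b)⁻¹ : ℂˣ) : ℂ) * ee a b = ee (a - a') b := fun a b => by
    rw [← Units.val_mul, inv_mul_eq_iff_eq_mul.2 (by rw [← hadd_left, add_sub_cancel])]
  calc ∑ b, ((ee a' b)⁻¹ : ℂˣ) * pairingTransform ee b v
      = ∑ a, v a * ∑ b, (ee (a - a') b : ℂ) := by
        simp only [pairingTransform_apply, Finset.mul_sum, ← hsub]
        rw [Finset.sum_comm]
        exact Finset.sum_congr rfl fun _ _ => Finset.sum_congr rfl fun _ _ => by ring
    _ = Fintype.card Adual * v a' := by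
        simp [sum_pairing_sub_eq_ite hadd_left hadd_right hnd_left, mul_comm]

end Transform

section Action

variable {A Adual G : Type*} [Fintype A] [DecidableEq A] (ee : A → Adual → ℂˣ) (π : G → A)

theorem Zact_eq_linearCombination (x : (Adual × G) →₀ ℂ) (v : A → ℂ) :
    Zact ee π x v = Finsupp.linearCombination ℂ
      (fun p : Adual × G => pairingTransform ee p.1 v • Pi.single (π p.2) (1 : ℂ)) x := by
  ext a'
  simp only [Zact, Finsupp.linearCombination_apply, Finsupp.sum, Finset.sum_apply, Pi.smul_apply,
    Pi.single_apply, smul_eq_mul, pairingTransform_apply, mul_ite, mul_one, mul_zero]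

theorem Zact_add_left (x y : (Adual × G) →₀ ℂ) (v : A → ℂ) :
    Zact ee π (x + y) v = Zact ee π x v + Zact ee π y v := by
  simp only [Zact_eq_linearCombination, map_add]

theorem Zact_smul_left (c : ℂ) (x : (Adual × G) →₀ ℂ) (v : A → ℂ) :
    Zact ee π (c • x) v = c • Zact ee π x v := by
  simp only [Zact_eq_linearCombination, map_smul]

theorem Zact_add_right (x : (Adual × G) →₀ ℂ) (u v : A → ℂ) :
    Zact ee π x (u + v) = Zact ee π x u + Zact ee π x v := by
  simp only [Zact_eq_linearCombination, Finsupp.linearCombination_apply, map_add, add_smul,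
    smul_add, Finsupp.sum_add]

theorem Zact_smul_right (x : (Adual × G) →₀ ℂ) (c : ℂ) (v : A → ℂ) :
    Zact ee π x (c • v) = c • Zact ee π x v := by
  simp only [Zact_eq_linearCombination, Finsupp.linearCombination_apply, map_smul,
    Finsupp.smul_sum, smul_assoc, smul_comm c]

theorem pairingTransform_Zact (y : (Adual × G) →₀ ℂ) (v : A → ℂ) (b : Adual) :
    pairingTransform ee b (Zact ee π y v) =
      y.sum fun p c => c * pairingTransform ee p.1 v * ee (π p.2) b := by
  simp only [Zact_eq_linearCombination, Finsupp.linearCombination_apply, map_finsuppSum,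
    map_smul, pairingTransform_single, smul_eq_mul, one_mul, mul_assoc]

theorem Zact_Zmul (x y : (Adual × G) →₀ ℂ) (v : A → ℂ) :
    Zact ee π (Zmul ee π x y) v = Zact ee π x (Zact ee π y v) := by
  rw [Zact_eq_linearCombination ee π (Zmul ee π x y), Zact_eq_linearCombination ee π x, Zmul]
  simp only [map_finsuppSum, Finsupp.linearCombination_single]
  simp only [Finsupp.linearCombination_apply, pairingTransform_Zact, Finsupp.sum,
    Finset.sum_smul, Finset.smul_sum, smul_smul]
  refine Finset.sum_congr rfl fun p₂ _ => Finset.sum_congr rfl fun p₁ _ => ?_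
  congr 1
  ring

end Action

theorem Zact_ZunitElem {A Adual G : Type*} [AddCommGroup A] [Fintype A] [DecidableEq A]
    [AddCommGroup Adual] [Fintype Adual] [Fintype G] {ee : A → Adual → ℂˣ} {π : G → A}
    (hadd_left : ∀ a a' b, ee (a + a') b = ee a b * ee a' b)
    (hadd_right : ∀ a b b', ee a (b + b') = ee a b * ee a b')
    (hcard : Fintype.card Adual = Fintype.card A)
    (hnd_left : ∀ a : A, a ≠ 0 → ∃ b, ee a b ≠ 1) (hbij : Function.Bijective π) (v : A → ℂ) :
    Zact ee π (ZunitElem ee π) v = v := by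
  ext a'
  have hfiber : ∀ b, ∑ g, (((ee (π g) b)⁻¹ : ℂˣ) : ℂ) * (if a' = π g then 1 else 0) =
      ((ee a' b)⁻¹ : ℂˣ) := fun b => by
    rw [hbij.sum_comp fun a => (((ee a b)⁻¹ : ℂˣ) : ℂ) * if a' = a then 1 else 0]
    simp
  have hA : (Fintype.card A : ℂ) ≠ 0 := Nat.cast_ne_zero.2 Fintype.card_ne_zero
  calc Zact ee π (ZunitElem ee π) v a'
      = (Fintype.card A : ℂ)⁻¹ *
          ∑ b, (∑ g, (((ee (π g) b)⁻¹ : ℂˣ) : ℂ) * (if a' = π g then 1 else 0)) *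
            pairingTransform ee b v := by
        rw [ZunitElem, Zact_smul_left, Zact_eq_linearCombination]
        simp only [map_sum, Finsupp.linearCombination_single, Pi.smul_apply, Finset.sum_apply,
          Pi.single_apply, smul_eq_mul, Finset.sum_mul]
        congr 1
        exact Finset.sum_congr rfl fun b _ => Finset.sum_congr rfl fun g _ => by ring
    _ = v a' := by
        simp only [hfiber, hcard,
          sum_inv_pairing_mul_pairingTransform ee hadd_left hadd_right hnd_left]
        field_simp

theorem Zact_module_general (G : Type*) [Fintype G]
    (A : Type*) [AddCommGroup A] [Fintype A] [DecidableEq A]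
    (Adual : Type*) [AddCommGroup Adual] [Fintype Adual]
    (ee : A → Adual → ℂˣ)
    (hadd_left : ∀ a a' b, ee (a + a') b = ee a b * ee a' b)
    (hadd_right : ∀ a b b', ee a (b + b') = ee a b * ee a b')
    (hcard : Fintype.card Adual = Fintype.card A)
    (hnd_left : ∀ a : A, a ≠ 0 → ∃ b, ee a b ≠ 1)
    (π : G → A) (hbij : Function.Bijective π) :
    (∀ (x y : (Adual × G) →₀ ℂ) (v : A → ℂ),
      Zact ee π (Zmul ee π x y) v = Zact ee π x (Zact ee π y v)) ∧
    (∀ v : A → ℂ, Zact ee π (ZunitElem ee π) v = v) ∧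
    (∀ (x : (Adual × G) →₀ ℂ) (u v : A → ℂ),
      Zact ee π x (u + v) = Zact ee π x u + Zact ee π x v) ∧
    (∀ (x : (Adual × G) →₀ ℂ) (c : ℂ) (v : A → ℂ),
      Zact ee π x (c • v) = c • Zact ee π x v) ∧
    (∀ (x y : (Adual × G) →₀ ℂ) (v : A → ℂ),
      Zact ee π (x + y) v = Zact ee π x v + Zact ee π y v) ∧
    (∀ (c : ℂ) (x : (Adual × G) →₀ ℂ) (v : A → ℂ),
      Zact ee π (c • x) v = c • Zact ee π x v) :=
  ⟨Zact_Zmul ee π, Zact_ZunitElem hadd_left hadd_right hcard hnd_left hbij,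
    Zact_add_right ee π, Zact_smul_right ee π, Zact_add_left ee π, Zact_smul_left ee π⟩

/-- The algebra with basis `{Z_{b,g}}` and product
`Z_{b₂,g₂} * Z_{b₁,g₁} = e^{(π(g₁),b₂)} Z_{b₁,g₂}` acts on `V = Fun(A, ℂ)` by
`Z_{b,g}·δ_a = e^{(a,b)} δ_{π(g)}`, and this is a well-defined (associative, unital)
module structure. -/
theorem Zact_module (G : Type*) [Group G] [Fintype G]
    (A : Type*) [AddCommGroup A] [Fintype A] [DecidableEq A] [DistribMulAction G A]
    (Adual : Type*) [AddCommGroup Adual] [Fintype Adual]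
    (ee : A → Adual → ℂˣ)
    (hadd_left : ∀ a a' b, ee (a + a') b = ee a b * ee a' b)
    (hadd_right : ∀ a b b', ee a (b + b') = ee a b * ee a b')
    (hcard : Fintype.card Adual = Fintype.card A)
    (hnd_left : ∀ a : A, a ≠ 0 → ∃ b, ee a b ≠ 1)
    (hnd_right : ∀ b : Adual, b ≠ 0 → ∃ a, ee a b ≠ 1)
    (π : G → A) (hbij : Function.Bijective π)
    (hcoc : ∀ g g' : G, π (g * g') = π g + g • π g') :
    (∀ (x y : (Adual × G) →₀ ℂ) (v : A → ℂ),
      Zact ee π (Zmul ee π x y) v = Zact ee π x (Zact ee π y v)) ∧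
    (∀ v : A → ℂ, Zact ee π (ZunitElem ee π) v = v) ∧
    (∀ (x : (Adual × G) →₀ ℂ) (u v : A → ℂ),
      Zact ee π x (u + v) = Zact ee π x u + Zact ee π x v) ∧
    (∀ (x : (Adual × G) →₀ ℂ) (c : ℂ) (v : A → ℂ),
      Zact ee π x (c • v) = c • Zact ee π x v) ∧
    (∀ (x y : (Adual × G) →₀ ℂ) (v : A → ℂ),
      Zact ee π (x + y) v = Zact ee π x v + Zact ee π y v) ∧
    (∀ (c : ℂ) (x : (Adual × G) →₀ ℂ) (v : A → ℂ),
      Zact ee π (c • x) v = c • Zact ee π x v) :=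
  Zact_module_general G A Adual ee hadd_left hadd_right hcard hnd_left π hbij
end

section
/- Let A be a finite abelian group and G a finite group acting on A, π: G → A a bijective 1-cocycle. Define φ on V = Fun(A, ℂ) by φ(b)δ_a = e^{−(a,b)}δ_a for b ∈ A*, φ(g)δ_a = δ_{g·a + π(g)} for g ∈ G, and φ(bg) = φ(b)φ(g). Then φ is a projective representation of the semidirect product H = G ⋉ A*: for all h₁, h₂ ∈ H, φ(h₁)φ(h₂) is a nonzero scalar multiple of φ(h₁h₂). -/
/-- `φ(b)` for `b ∈ A*`: the operator on `V = Fun(A,ℂ)` with `φ(b)δ_a = e^{−(a,b)}δ_a`,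
i.e. `(φ(b)v)(a) = e^{(a,b)}⁻¹ v(a)`. -/
noncomputable def phiB {A Adual : Type*} (ee : A → Adual → ℂˣ) (b : Adual) :
    (A → ℂ) →ₗ[ℂ] (A → ℂ) where
  toFun v := fun a => (((ee a b)⁻¹ : ℂˣ) : ℂ) * v a
  map_add' u v := by funext a; simp [mul_add]
  map_smul' c v := by funext a; simp [Pi.smul_apply, smul_eq_mul]; ring

/-- `φ(g)` for `g ∈ G`: the operator on `V = Fun(A,ℂ)` with `φ(g)δ_a = δ_{g·a+π(g)}`,
i.e. `(φ(g)v)(a) = v(g⁻¹·(a − π(g)))`. -/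
noncomputable def phiG {A G : Type*} [Group G] [AddCommGroup A] [DistribMulAction G A]
    (π : G → A) (g : G) : (A → ℂ) →ₗ[ℂ] (A → ℂ) :=
  LinearMap.funLeft ℂ ℂ (fun a => g⁻¹ • (a - π g))

/-!
`φ` restricted to `G` is an honest representation because `π` is a cocycle, and restricted to
`A*` it is one because the pairing is additive in `b`. The only defect is the commutation
relation `φ(g)φ(b) = e^{(g⁻¹·π(g), b)} φ(g·b)φ(g)`: moving `φ(g₂)` past `φ(b₁)` in
`φ(b₂)φ(g₂)φ(b₁)φ(g₁)` produces exactly one nonzero scalar.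
-/

@[simp]
lemma phiB_apply {A Adual : Type*} (ee : A → Adual → ℂˣ) (b : Adual) (v : A → ℂ) (a : A) :
    phiB ee b v a = ((ee a b)⁻¹ : ℂˣ) * v a :=
  rfl

lemma phiB_add {A Adual : Type*} [AddCommGroup Adual] (ee : A → Adual → ℂˣ)
    (hadd_right : ∀ a b b', ee a (b + b') = ee a b * ee a b') (b b' : Adual) :
    phiB ee (b + b') = phiB ee b ∘ₗ phiB ee b' := by
  ext v a
  simp only [phiB_apply, LinearMap.comp_apply, hadd_right, mul_inv_rev, Units.val_mul]
  ring

section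

variable {A G : Type*} [AddCommGroup A] [Group G] [DistribMulAction G A]

@[simp]
lemma phiG_apply (π : G → A) (g : G) (v : A → ℂ) (a : A) :
    phiG π g v a = v (g⁻¹ • (a - π g)) :=
  rfl

lemma phiG_mul (π : G → A) (hcoc : ∀ g g' : G, π (g * g') = π g + g • π g') (g g' : G) :
    phiG π (g * g') = phiG π g ∘ₗ phiG π g' := by
  ext v a
  simp only [phiG_apply, LinearMap.comp_apply, hcoc, mul_inv_rev, mul_smul, smul_sub,
    smul_add, inv_smul_smul, sub_sub]

lemma phiG_comp_phiB {Adual : Type*} [AddCommGroup Adual] [DistribMulAction G Adual]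
    (ee : A → Adual → ℂˣ) (hadd_left : ∀ a a' b, ee (a + a') b = ee a b * ee a' b)
    (hdual : ∀ (g : G) (a : A) (b : Adual), ee a (g • b) = ee (g⁻¹ • a) b)
    (π : G → A) (g : G) (b : Adual) :
    phiG π g ∘ₗ phiB ee b = (ee (g⁻¹ • π g) b : ℂ) • (phiB ee (g • b) ∘ₗ phiG π g) := by
  ext v a
  have hsplit := hadd_left (g⁻¹ • (a - π g)) (g⁻¹ • π g) b
  rw [← smul_add, sub_add_cancel] at hsplit
  simp only [LinearMap.comp_apply, LinearMap.smul_apply, Pi.smul_apply, smul_eq_mul,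
    phiG_apply, phiB_apply, hdual, hsplit, mul_inv_rev, Units.val_mul]
  rw [mul_assoc, Units.mul_inv_cancel_left]

end

theorem phi_projective_representation_general (G : Type*) [Group G]
    (A : Type*) [AddCommGroup A] [DistribMulAction G A]
    (Adual : Type*) [AddCommGroup Adual] [DistribMulAction G Adual]
    (ee : A → Adual → ℂˣ)
    (hadd_left : ∀ a a' b, ee (a + a') b = ee a b * ee a' b)
    (hadd_right : ∀ a b b', ee a (b + b') = ee a b * ee a b')
    (hdual : ∀ (g : G) (a : A) (b : Adual), ee a (g • b) = ee (g⁻¹ • a) b)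
    (π : G → A)
    (hcoc : ∀ g g' : G, π (g * g') = π g + g • π g') :
    ∀ (b₂ : Adual) (g₂ : G) (b₁ : Adual) (g₁ : G), ∃ c : ℂˣ,
      (phiB ee b₂ ∘ₗ phiG π g₂) ∘ₗ (phiB ee b₁ ∘ₗ phiG π g₁) =
        (c : ℂ) • (phiB ee (b₂ + g₂ • b₁) ∘ₗ phiG π (g₂ * g₁)) := by
  intro b₂ g₂ b₁ g₁
  refine ⟨ee (g₂⁻¹ • π g₂) b₁, ?_⟩
  calc (phiB ee b₂ ∘ₗ phiG π g₂) ∘ₗ (phiB ee b₁ ∘ₗ phiG π g₁)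
      = phiB ee b₂ ∘ₗ (phiG π g₂ ∘ₗ phiB ee b₁) ∘ₗ phiG π g₁ := by
        simp only [LinearMap.comp_assoc]
    _ = _ := by
        rw [phiG_comp_phiB ee hadd_left hdual, phiB_add ee hadd_right, phiG_mul π hcoc]
        simp only [LinearMap.smul_comp, LinearMap.comp_smul, LinearMap.comp_assoc]

/-- `φ(h) = φ(b)φ(g)` for `h = bg ∈ H = G ⋉ A*` is a projective representation of `H` on
`V = Fun(A,ℂ)`: for all `h₁ = b₂g₂`, `h₂ = b₁g₁` in `H`, `φ(h₁)φ(h₂)` is a nonzero scalar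
multiple of `φ(h₁h₂)`, where `h₁h₂ = (b₂ + g₂·b₁)(g₂g₁)` in the semidirect product. -/
theorem phi_projective_representation (G : Type*) [Group G] [Fintype G]
    (A : Type*) [AddCommGroup A] [Fintype A] [DistribMulAction G A]
    (Adual : Type*) [AddCommGroup Adual] [Fintype Adual] [DistribMulAction G Adual]
    (ee : A → Adual → ℂˣ)
    (hadd_left : ∀ a a' b, ee (a + a') b = ee a b * ee a' b)
    (hadd_right : ∀ a b b', ee a (b + b') = ee a b * ee a b')
    (hdual : ∀ (g : G) (a : A) (b : Adual), ee a (g • b) = ee (g⁻¹ • a) b)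
    (π : G → A) (hbij : Function.Bijective π)
    (hcoc : ∀ g g' : G, π (g * g') = π g + g • π g') :
    ∀ (b₂ : Adual) (g₂ : G) (b₁ : Adual) (g₁ : G), ∃ c : ℂˣ,
      (phiB ee b₂ ∘ₗ phiG π g₂) ∘ₗ (phiB ee b₁ ∘ₗ phiG π g₁) =
        (c : ℂ) • (phiB ee (b₂ + g₂ • b₁) ∘ₗ phiG π (g₂ * g₁)) :=
  phi_projective_representation_general G A Adual ee hadd_left hadd_right hdual π hcoc
end

section
/- With notation as above, the projective representation φ of H = G ⋉ A* on V = Fun(A,ℂ) is irreducible, i.e. the operators φ(h), h ∈ H, span End(V). -/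
/-! The characters `a ↦ e(a,b)⁻¹`, `b ∈ A*`, are pairwise distinct by nondegeneracy, hence
linearly independent, and there are `|A|` of them, so they span `Fun(A,ℂ)`. Hence the span of the
`φ(b)φ(g)` contains `M_f ∘ φ(g)` for every multiplication operator `M_f`. As `π` is a surjective
cocycle, for all `a, a'` some `g` satisfies `g·a' + π(g) = a`, and then `M_{δ_a} ∘ φ(g)` is the
matrix unit `E_{a,a'}`. -/

open Submodule Set

section Operators

variable {R A : Type*} [CommSemiring R]

theorem span_mulLeft_comp_funLeft_eq_top [Fintype A] [DecidableEq A] {ι : Type*}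
    (τ : ι → A → A) (hτ : ∀ a a', ∃ i, τ i a = a') :
    span R (range fun p : (A → R) × ι =>
      LinearMap.mulLeft R p.1 ∘ₗ LinearMap.funLeft R R (τ p.2)) = ⊤ := by
  rw [eq_top_iff, ← ((Matrix.stdBasis R A A).map Matrix.toLin').span_eq, span_le]
  rintro _ ⟨⟨a, a'⟩, rfl⟩
  obtain ⟨i, hi⟩ := hτ a a'
  refine subset_span ⟨(Pi.single a 1, i), ?_⟩
  ext y x
  by_cases hx : x = a
  · subst hx
    simp [Matrix.stdBasis_eq_single, Matrix.single_apply, Pi.single_apply, hi]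
  · simp [Matrix.stdBasis_eq_single, Ne.symm hx]

theorem span_range_mulLeft_comp_eq {κ ι : Type*} {χ : κ → A → R} (hχ : span R (range χ) = ⊤)
    (P : ι → Module.End R (A → R)) :
    span R (range fun p : κ × ι => LinearMap.mulLeft R (χ p.1) ∘ₗ P p.2) =
      span R (range fun p : (A → R) × ι => LinearMap.mulLeft R p.1 ∘ₗ P p.2) := by
  refine le_antisymm (span_mono ?_) (span_le.mpr ?_)
  · rintro _ ⟨⟨b, i⟩, rfl⟩
    exact ⟨(χ b, i), rfl⟩
  · rintro _ ⟨⟨f, i⟩, rfl⟩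
    let L := (LinearMap.llcomp R _ _ _).flip (P i) ∘ₗ LinearMap.mul R (A → R)
    have hle : span R (range χ) ≤ (span R (range fun p : κ × ι =>
        LinearMap.mulLeft R (χ p.1) ∘ₗ P p.2)).comap L :=
      span_le.mpr <| range_subset_iff.mpr fun b => subset_span ⟨(b, i), rfl⟩
    exact hle (hχ ▸ mem_top)

end Operators

section Pairing

variable {A B : Type*} [AddCommGroup A] [AddCommGroup B] (ee : A → B → ℂˣ)

def pairingInvChar (hadd_left : ∀ a a' b, ee (a + a') b = ee a b * ee a' b) (b : B) :
    AddChar A ℂ where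
  toFun a := ((ee a b)⁻¹ : ℂˣ)
  map_zero_eq_one' := by
    have h0 : ee 0 b = 1 :=
      mul_eq_left.mp (by rw [← hadd_left, add_zero] : ee 0 b * ee 0 b = ee 0 b)
    rw [h0, inv_one, Units.val_one]
  map_add_eq_mul' a a' := by rw [hadd_left, mul_inv, Units.val_mul]

theorem pairingInvChar_injective (hadd_left : ∀ a a' b, ee (a + a') b = ee a b * ee a' b)
    (hadd_right : ∀ a b b', ee a (b + b') = ee a b * ee a b')
    (hnd_right : ∀ b : B, b ≠ 0 → ∃ a, ee a b ≠ 1) :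
    Function.Injective (pairingInvChar ee hadd_left) := by
  intro b b' hbb'
  have heq (a : A) : ee a b = ee a b' :=
    inv_injective <| Units.ext <| DFunLike.congr_fun hbb' a
  by_contra hne
  obtain ⟨a, ha⟩ := hnd_right (b - b') (sub_ne_zero.mpr hne)
  refine ha ((mul_eq_right (b := ee a b')).mp ?_)
  rw [← hadd_right, sub_add_cancel, heq]

theorem span_range_pairing_inv_eq_top [Fintype A] [Fintype B]
    (hadd_left : ∀ a a' b, ee (a + a') b = ee a b * ee a' b)
    (hadd_right : ∀ a b b', ee a (b + b') = ee a b * ee a b')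
    (hnd_right : ∀ b : B, b ≠ 0 → ∃ a, ee a b ≠ 1) (hcard : Fintype.card B = Fintype.card A) :
    span ℂ (range fun b a => (((ee a b)⁻¹ : ℂˣ) : ℂ)) = ⊤ :=
  ((AddChar.linearIndependent A ℂ).comp _
      (pairingInvChar_injective ee hadd_left hadd_right hnd_right)).span_eq_top_of_card_eq_finrank'
    (by rw [Module.finrank_fintype_fun_eq_card, hcard])

end Pairing

theorem exists_inv_smul_sub_eq_of_surjective_cocycle {G A : Type*} [Group G] [AddCommGroup A]
    [DistribMulAction G A] {π : G → A} (hπ : Function.Surjective π)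
    (hcoc : ∀ g g' : G, π (g * g') = π g + g • π g') (a a' : A) :
    ∃ g, g⁻¹ • (a - π g) = a' := by
  obtain ⟨h, rfl⟩ := hπ a'
  obtain ⟨k, rfl⟩ := hπ a
  refine ⟨k * h⁻¹, ?_⟩
  rw [← inv_mul_cancel_right k h, hcoc, mul_inv_cancel_right, add_sub_cancel_left,
    inv_smul_smul]

theorem phi_irreducible_general (G : Type*) [Group G]
    (A : Type*) [AddCommGroup A] [Fintype A] [DistribMulAction G A]
    (Adual : Type*) [AddCommGroup Adual] [Fintype Adual]
    (ee : A → Adual → ℂˣ)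
    (hadd_left : ∀ a a' b, ee (a + a') b = ee a b * ee a' b)
    (hadd_right : ∀ a b b', ee a (b + b') = ee a b * ee a b')
    (hcard : Fintype.card Adual = Fintype.card A)
    (hnd_right : ∀ b : Adual, b ≠ 0 → ∃ a, ee a b ≠ 1)
    (π : G → A) (hbij : Function.Bijective π)
    (hcoc : ∀ g g' : G, π (g * g') = π g + g • π g') :
    Submodule.span ℂ
        (Set.range fun p : Adual × G => phiB ee p.1 ∘ₗ phiG π p.2) =
      (⊤ : Submodule ℂ ((A → ℂ) →ₗ[ℂ] (A → ℂ))) := by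
  classical
  have hχ := span_range_pairing_inv_eq_top ee hadd_left hadd_right hnd_right hcard
  have hτ : ∀ a a' : A, ∃ g : G, g⁻¹ • (a - π g) = a' :=
    exists_inv_smul_sub_eq_of_surjective_cocycle hbij.2 hcoc
  calc span ℂ (range fun p : Adual × G => phiB ee p.1 ∘ₗ phiG π p.2)
      _ = span ℂ (range fun p : (A → ℂ) × G =>
            LinearMap.mulLeft ℂ p.1 ∘ₗ LinearMap.funLeft ℂ ℂ (fun a => p.2⁻¹ • (a - π p.2))) :=
        span_range_mulLeft_comp_eq hχ fun g => LinearMap.funLeft ℂ ℂ (fun a => g⁻¹ • (a - π g))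
      _ = ⊤ := span_mulLeft_comp_funLeft_eq_top (fun g a => g⁻¹ • (a - π g)) hτ

/-- The projective representation `φ` of `H = G ⋉ A*` on `V = Fun(A,ℂ)` given by
`φ(b)δ_a = e^{−(a,b)}δ_a`, `φ(g)δ_a = δ_{g·a+π(g)}`, `φ(bg) = φ(b)φ(g)` is irreducible:
the operators `φ(h)`, `h ∈ H`, span `End(V)`. -/
theorem phi_irreducible (G : Type*) [Group G] [Fintype G]
    (A : Type*) [AddCommGroup A] [Fintype A] [DistribMulAction G A]
    (Adual : Type*) [AddCommGroup Adual] [Fintype Adual] [DistribMulAction G Adual]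
    (ee : A → Adual → ℂˣ)
    (hadd_left : ∀ a a' b, ee (a + a') b = ee a b * ee a' b)
    (hadd_right : ∀ a b b', ee a (b + b') = ee a b * ee a b')
    (hcard : Fintype.card Adual = Fintype.card A)
    (hnd_left : ∀ a : A, a ≠ 0 → ∃ b, ee a b ≠ 1)
    (hnd_right : ∀ b : Adual, b ≠ 0 → ∃ a, ee a b ≠ 1)
    (hdual : ∀ (g : G) (a : A) (b : Adual), ee a (g • b) = ee (g⁻¹ • a) b)
    (π : G → A) (hbij : Function.Bijective π)
    (hcoc : ∀ g g' : G, π (g * g') = π g + g • π g') :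
    Submodule.span ℂ
        (Set.range fun p : Adual × G => phiB ee p.1 ∘ₗ phiG π p.2) =
      (⊤ : Submodule ℂ ((A → ℂ) →ₗ[ℂ] (A → ℂ))) :=
  phi_irreducible_general G A Adual ee hadd_left hadd_right hcard hnd_right π hbij hcoc
end

section
/- Let f: A → B be an isomorphism of Hopf algebras from A^J to B^{J'}, where J, J' are twists for A, B respectively. Then J'·(f⊗f)(J)⁻¹ is a twist for B. -/
open TensorProduct

/-!
Write `K = (f ⊗ f)(J)`, `T = J' K⁻¹` and `D = (f ⊗ f) ∘ Δ_A ∘ f⁻¹` for the coproduct of `A`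
transported to `B`; `K` satisfies the twist equation for `D` because `J` does for `Δ_A`. The
hypothesis on `f` says exactly that `T` intertwines `D` with `Δ_B`: `Δ_B(b) T = T D(b)`. For such
a `T`, each side of the twist equation, `(Δ ⊗ id)(J) (J ⊗ 1)` and `(id ⊗ Δ)(J) (1 ⊗ J)`, takes
`T K` for `Δ_B` to the product of its value at `T` for `Δ_B` and its value at `K` for `D`. Since
`T K = J'` satisfies the twist equation for `Δ_B`, `K` satisfies it for `D`, and the factor for `K`
is invertible, `T` satisfies it for `Δ_B`. The counit conditions hold because `ε ⊗ id` and
`id ⊗ ε` are algebra maps sending `J'` and `K` to `1`.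
-/

theorem map_ringInverse {M₀ N₀ F : Type*} [MonoidWithZero M₀] [MonoidWithZero N₀]
    [FunLike F M₀ N₀] [MonoidHomClass F M₀ N₀] (φ : F) {x : M₀} (hx : IsUnit x) :
    φ (Ring.inverse x) = Ring.inverse (φ x) := by
  obtain ⟨u, rfl⟩ := hx
  have h := Ring.inverse_unit (Units.map (φ : M₀ →* N₀) u)
  simp only [Units.coe_map, MonoidHom.coe_coe, Units.coe_map_inv] at h
  rw [h, Ring.inverse_unit]

theorem map_mul_ringInverse_eq_one {M₀ N₀ F : Type*} [MonoidWithZero M₀] [MonoidWithZero N₀]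
    [FunLike F M₀ N₀] [MonoidHomClass F M₀ N₀] (χ : F) {x y : M₀} (hy : IsUnit y)
    (hx : χ x = 1) (hy₁ : χ y = 1) : χ (x * Ring.inverse y) = 1 := by
  rw [map_mul, map_ringInverse χ hy, hx, hy₁, Ring.inverse_one, mul_one]

theorem semiconjBy_mul_ringInverse {M₀ : Type*} [MonoidWithZero M₀] {u v x y : M₀}
    (hu : IsUnit u) (hv : IsUnit v) (h : Ring.inverse u * x * u = Ring.inverse v * y * v) :
    SemiconjBy (v * Ring.inverse u) x y := by
  obtain ⟨u, rfl⟩ := hu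
  obtain ⟨v, rfl⟩ := hv
  rw [Ring.inverse_unit, Ring.inverse_unit] at h
  rw [Ring.inverse_unit]
  calc v * ↑u⁻¹ * x = v * (↑u⁻¹ * x * u) * ↑u⁻¹ := by simp [mul_assoc]
    _ = v * (↑v⁻¹ * y * v) * ↑u⁻¹ := by rw [h]
    _ = y * (v * ↑u⁻¹) := by simp [mul_assoc]

namespace TensorProduct

section Cocycle

variable {R A B : Type*} [CommSemiring R] [Semiring A] [Algebra R A] [Semiring B] [Algebra R B]

noncomputable def twistCocycleLeft (Δ : A →ₗ[R] A ⊗[R] A) (J : A ⊗[R] A) :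
    (A ⊗[R] A) ⊗[R] A :=
  map Δ LinearMap.id J * (J ⊗ₜ[R] (1 : A))

noncomputable def twistCocycleRight (Δ : A →ₗ[R] A ⊗[R] A) (J : A ⊗[R] A) :
    (A ⊗[R] A) ⊗[R] A :=
  (Algebra.TensorProduct.assoc R R R A A A).symm (map LinearMap.id Δ J * ((1 : A) ⊗ₜ[R] J))

section Semiconj

variable {Δ D : A →ₗ[R] A ⊗[R] A} {T : A ⊗[R] A}

theorem semiconjBy_map_tmul_one (hTD : ∀ b, SemiconjBy T (D b) (Δ b)) (G : A ⊗[R] A) :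
    SemiconjBy (T ⊗ₜ[R] (1 : A)) (map D LinearMap.id G) (map Δ LinearMap.id G) := by
  induction G using TensorProduct.induction_on with
  | zero => simp
  | tmul x y => simp [SemiconjBy, Algebra.TensorProduct.tmul_mul_tmul, (hTD x).eq]
  | add u v hu hv => simpa only [map_add] using hu.add_right hv

theorem semiconjBy_map_one_tmul (hTD : ∀ b, SemiconjBy T (D b) (Δ b)) (G : A ⊗[R] A) :
    SemiconjBy ((1 : A) ⊗ₜ[R] T) (map LinearMap.id D G) (map LinearMap.id Δ G) := by
  induction G using TensorProduct.induction_on with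
  | zero => simp
  | tmul x y => simp [SemiconjBy, Algebra.TensorProduct.tmul_mul_tmul, (hTD y).eq]
  | add u v hu hv => simpa only [map_add] using hu.add_right hv

end Semiconj

section Mul

variable {Δ : A →ₐ[R] A ⊗[R] A} {D : A →ₗ[R] A ⊗[R] A} {T : A ⊗[R] A}

theorem twistCocycleLeft_mul (hTD : ∀ b, SemiconjBy T (D b) (Δ b)) (G : A ⊗[R] A) :
    twistCocycleLeft Δ.toLinearMap (T * G) =
      twistCocycleLeft Δ.toLinearMap T * twistCocycleLeft D G := by
  have hΔ : map Δ.toLinearMap LinearMap.id (T * G) =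
      map Δ.toLinearMap LinearMap.id T * map Δ.toLinearMap LinearMap.id G :=
    map_mul (Algebra.TensorProduct.map Δ (AlgHom.id R A)) T G
  have hG := (semiconjBy_map_tmul_one (Δ := Δ.toLinearMap) hTD G).eq
  have hTG : (T * G) ⊗ₜ[R] (1 : A) = (T ⊗ₜ[R] (1 : A)) * (G ⊗ₜ[R] (1 : A)) := by
    rw [Algebra.TensorProduct.tmul_mul_tmul, mul_one]
  simp only [twistCocycleLeft]
  rw [hΔ, hTG, mul_assoc, mul_assoc, ← mul_assoc (T ⊗ₜ[R] _), hG, mul_assoc]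

theorem twistCocycleRight_mul (hTD : ∀ b, SemiconjBy T (D b) (Δ b)) (G : A ⊗[R] A) :
    twistCocycleRight Δ.toLinearMap (T * G) =
      twistCocycleRight Δ.toLinearMap T * twistCocycleRight D G := by
  have hΔ : map LinearMap.id Δ.toLinearMap (T * G) =
      map LinearMap.id Δ.toLinearMap T * map LinearMap.id Δ.toLinearMap G :=
    map_mul (Algebra.TensorProduct.map (AlgHom.id R A) Δ) T G
  have hG := (semiconjBy_map_one_tmul (Δ := Δ.toLinearMap) hTD G).eq
  have hTG : (1 : A) ⊗ₜ[R] (T * G) = ((1 : A) ⊗ₜ[R] T) * ((1 : A) ⊗ₜ[R] G) := by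
    rw [Algebra.TensorProduct.tmul_mul_tmul, mul_one]
  simp only [twistCocycleRight]
  rw [← map_mul, hΔ, hTG, mul_assoc, mul_assoc, ← mul_assoc ((1 : A) ⊗ₜ[R] T), hG,
    mul_assoc]

theorem twistCocycle_eq_of_semiconjBy (hTD : ∀ b, SemiconjBy T (D b) (Δ b)) {K : A ⊗[R] A}
    (hTK : twistCocycleLeft Δ.toLinearMap (T * K) = twistCocycleRight Δ.toLinearMap (T * K))
    (hK : twistCocycleLeft D K = twistCocycleRight D K) (hKu : IsUnit (twistCocycleLeft D K)) :
    twistCocycleLeft Δ.toLinearMap T = twistCocycleRight Δ.toLinearMap T := by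
  rw [← hKu.mul_left_inj, ← twistCocycleLeft_mul hTD, hTK, twistCocycleRight_mul hTD, hK]

end Mul

theorem isUnit_twistCocycleLeft (Δ : A →ₐ[R] A ⊗[R] A) {J : A ⊗[R] A} (hJ : IsUnit J) :
    IsUnit (twistCocycleLeft Δ.toLinearMap J) :=
  (hJ.map (Algebra.TensorProduct.map Δ (AlgHom.id R A))).mul
    (hJ.map (Algebra.TensorProduct.includeLeft (S := R) (B := A)))

section Map

variable (φ : A →ₐ[R] B) {ΔA : A →ₗ[R] A ⊗[R] A} {ΔB : B →ₗ[R] B ⊗[R] B}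

theorem twistCocycleLeft_map (hφ : ∀ a, Algebra.TensorProduct.map φ φ (ΔA a) = ΔB (φ a))
    (J : A ⊗[R] A) :
    twistCocycleLeft ΔB (Algebra.TensorProduct.map φ φ J) =
      Algebra.TensorProduct.map (Algebra.TensorProduct.map φ φ) φ (twistCocycleLeft ΔA J) := by
  have hΔ : map ΔB LinearMap.id (Algebra.TensorProduct.map φ φ J) =
      Algebra.TensorProduct.map (Algebra.TensorProduct.map φ φ) φ (map ΔA LinearMap.id J) := by
    induction J using TensorProduct.induction_on with
    | zero => simp
    | tmul x y => simp [hφ]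
    | add u v hu hv => simp only [map_add, hu, hv]
  simp [twistCocycleLeft, hΔ]

theorem twistCocycleRight_map (hφ : ∀ a, Algebra.TensorProduct.map φ φ (ΔA a) = ΔB (φ a))
    (J : A ⊗[R] A) :
    twistCocycleRight ΔB (Algebra.TensorProduct.map φ φ J) =
      Algebra.TensorProduct.map (Algebra.TensorProduct.map φ φ) φ (twistCocycleRight ΔA J) := by
  have hΔ : map LinearMap.id ΔB (Algebra.TensorProduct.map φ φ J) =
      Algebra.TensorProduct.map φ (Algebra.TensorProduct.map φ φ) (map LinearMap.id ΔA J) := by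
    induction J using TensorProduct.induction_on with
    | zero => simp
    | tmul x y => simp [hφ]
    | add u v hu hv => simp only [map_add, hu, hv]
  have hassoc (z : A ⊗[R] (A ⊗[R] A)) :
      Algebra.TensorProduct.map (Algebra.TensorProduct.map φ φ) φ
          ((Algebra.TensorProduct.assoc R R R A A A).symm z) =
        (Algebra.TensorProduct.assoc R R R B B B).symm
          (Algebra.TensorProduct.map φ (Algebra.TensorProduct.map φ φ) z) :=
    map_map_assoc_symm φ.toLinearMap φ.toLinearMap φ.toLinearMap z
  simp [twistCocycleRight, hΔ, hassoc]

end Map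

end Cocycle

section Counit

variable {R A B : Type*} [CommSemiring R] [Semiring A] [Bialgebra R A] [Semiring B] [Bialgebra R B]

theorem lid_map_counit_map (f : A →ₐ[R] B)
    (hf : ∀ a, Coalgebra.counit (R := R) (f a) = Coalgebra.counit (R := R) a) (z : A ⊗[R] A) :
    TensorProduct.lid R B
        (map (Coalgebra.counit (R := R)) LinearMap.id (Algebra.TensorProduct.map f f z)) =
      f (TensorProduct.lid R A (map (Coalgebra.counit (R := R)) LinearMap.id z)) := by
  induction z using TensorProduct.induction_on with
  | zero => simp
  | tmul x y => simp [hf]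
  | add u v hu hv => simp only [map_add, hu, hv]

theorem rid_map_counit_map (f : A →ₐ[R] B)
    (hf : ∀ a, Coalgebra.counit (R := R) (f a) = Coalgebra.counit (R := R) a) (z : A ⊗[R] A) :
    TensorProduct.rid R B
        (map LinearMap.id (Coalgebra.counit (R := R)) (Algebra.TensorProduct.map f f z)) =
      f (TensorProduct.rid R A (map LinearMap.id (Coalgebra.counit (R := R)) z)) := by
  induction z using TensorProduct.induction_on with
  | zero => simp
  | tmul x y => simp [hf]
  | add u v hu hv => simp only [map_add, hu, hv]

theorem lid_map_counit_mul_ringInverse_eq_one {x y : A ⊗[R] A} (hy : IsUnit y)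
    (hx : TensorProduct.lid R A (map (Coalgebra.counit (R := R)) LinearMap.id x) = 1)
    (hy₁ : TensorProduct.lid R A (map (Coalgebra.counit (R := R)) LinearMap.id y) = 1) :
    TensorProduct.lid R A
      (map (Coalgebra.counit (R := R)) LinearMap.id (x * Ring.inverse y)) = 1 :=
  map_mul_ringInverse_eq_one ((Algebra.TensorProduct.lid R A).toAlgHom.comp
    (Algebra.TensorProduct.map (Bialgebra.counitAlgHom R A) (AlgHom.id R A))) hy hx hy₁

theorem rid_map_counit_mul_ringInverse_eq_one {x y : A ⊗[R] A} (hy : IsUnit y)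
    (hx : TensorProduct.rid R A (map LinearMap.id (Coalgebra.counit (R := R)) x) = 1)
    (hy₁ : TensorProduct.rid R A (map LinearMap.id (Coalgebra.counit (R := R)) y) = 1) :
    TensorProduct.rid R A
      (map LinearMap.id (Coalgebra.counit (R := R)) (x * Ring.inverse y)) = 1 :=
  map_mul_ringInverse_eq_one ((Algebra.TensorProduct.rid R R A).toAlgHom.comp
    (Algebra.TensorProduct.map (AlgHom.id R A) (Bialgebra.counitAlgHom R A))) hy hx hy₁

end Counit

end TensorProduct

theorem isHopfTwist_iff {k A : Type*} [Field k] [Ring A] [HopfAlgebra k A] {J : A ⊗[k] A} :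
    IsHopfTwist k A J ↔ IsUnit J ∧
      twistCocycleLeft (Coalgebra.comul (R := k)) J =
        twistCocycleRight (Coalgebra.comul (R := k)) J ∧
      TensorProduct.lid k A (map (Coalgebra.counit (R := k)) LinearMap.id J) = 1 ∧
      TensorProduct.rid k A (map LinearMap.id (Coalgebra.counit (R := k)) J) = 1 :=
  Iff.rfl

theorem twistedComul_apply {k A : Type*} [Field k] [Ring A] [HopfAlgebra k A]
    (J : A ⊗[k] A) (a : A) :
    twistedComul k A J a = Ring.inverse J * Coalgebra.comul (R := k) a * J :=
  rfl

/-- If `f : A^J → B^{J'}` is an isomorphism of Hopf algebras, where `J`, `J'` are twists for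
`A`, `B`, then `J' · (f⊗f)(J)⁻¹` is a twist for `B`. -/
theorem twist_of_iso (k : Type*) [Field k] (A : Type*) [Ring A] [HopfAlgebra k A]
    (B : Type*) [Ring B] [HopfAlgebra k B]
    (J : A ⊗[k] A) (hJ : IsHopfTwist k A J) (J' : B ⊗[k] B) (hJ' : IsHopfTwist k B J')
    (f : A ≃ₐ[k] B)
    (hcoalg : ∀ a : A,
      TensorProduct.map f.toLinearMap f.toLinearMap (twistedComul k A J a) =
        twistedComul k B J' (f a))
    (hcounit : ∀ a : A, Coalgebra.counit (R := k) (f a) = Coalgebra.counit (R := k) a) :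
    IsHopfTwist k B
      (J' * Ring.inverse (TensorProduct.map f.toLinearMap f.toLinearMap J)) := by
  obtain ⟨hJu, hJc, hJl, hJr⟩ := isHopfTwist_iff.mp hJ
  obtain ⟨hJ'u, hJ'c, hJ'l, hJ'r⟩ := isHopfTwist_iff.mp hJ'
  let F := Algebra.TensorProduct.map (f : A →ₐ[k] B) (f : A →ₐ[k] B)
  change IsHopfTwist k B (J' * Ring.inverse (F J))
  have hKu : IsUnit (F J) := hJu.map F
  let D : B →ₗ[k] B ⊗[k] B :=
    F.toLinearMap ∘ₗ Coalgebra.comul (R := k) ∘ₗ f.symm.toLinearMap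
  have hFD (a : A) : F (Coalgebra.comul (R := k) a) = D (f a) := by simp [D]
  have hTD (b : B) :
      SemiconjBy (J' * Ring.inverse (F J)) (D b) (Bialgebra.comulAlgHom k B b) := by
    refine semiconjBy_mul_ringInverse hKu hJ'u ?_
    have h := hcoalg (f.symm b)
    rw [twistedComul_apply, twistedComul_apply, AlgEquiv.apply_symm_apply] at h
    change F (Ring.inverse J * Coalgebra.comul (R := k) (f.symm b) * J) = _ at h
    rwa [map_mul, map_mul, map_ringInverse F hJu] at h
  refine isHopfTwist_iff.mpr ⟨hJ'u.mul hKu.ringInverse, ?_, ?_, ?_⟩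
  · rw [← Bialgebra.toLinearMap_comulAlgHom]
    refine twistCocycle_eq_of_semiconjBy hTD (K := F J) ?_ ?_ ?_
    · rwa [mul_assoc, Ring.inverse_mul_cancel _ hKu, mul_one]
    · rw [twistCocycleLeft_map _ hFD, twistCocycleRight_map _ hFD, hJc]
    · rw [twistCocycleLeft_map _ hFD]
      exact (isUnit_twistCocycleLeft (Bialgebra.comulAlgHom k A) hJu).map _
  · exact lid_map_counit_mul_ringInverse_eq_one hKu hJ'l
      (by rw [lid_map_counit_map (f : A →ₐ[k] B) hcounit, hJl, map_one])
  · exact rid_map_counit_mul_ringInverse_eq_one hKu hJ'r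
      (by rw [rid_map_counit_map (f : A →ₐ[k] B) hcounit, hJr, map_one])
end
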